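/- (Theorem A) Let M be a finite subset of a countable surjunctive group G. Let A be a finite alphabet and S = A^(A^M). Suppose that σ_s is stably injective for some asymptotically constant s ∈ S^G. Then σ_s is stably invertible. -/

import Mathlib

open Function Set Pointwise

section Defs

variable {G A S : Type*} [Group G]

/-- The NUCA `σ_s : A^G → A^G` determined by the configuration of local
defining maps `s ∈ S^G`, `S = A^(A^M)`:
`σ_s(x)(g) = s(g)((g⁻¹x)|_M)` where `(g⁻¹x)(h) = x(gh)`. -/
def nuca {M : Finset G} (s : G → ((M → A) → A)) : (G → A) → (G → A) :=
  fun x g => s g fun m => x (g * (m : G))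

/-- The closure, in the prodiscrete topology on `S^G`, of the shift orbit
`{gs : g ∈ G}`, where `(gs)(h) = s(g⁻¹h)`. -/
def orbitClosure (s : G → S) : Set (G → S) :=
  @closure (G → S) (@Pi.topologicalSpace G (fun _ => S) fun _ => ⊥)
    {p | ∃ g : G, p = fun h => s (g⁻¹ * h)}

/-- `τ` is a NUCA with finite memory. -/
def IsNUCAFin (τ : (G → A) → (G → A)) : Prop :=
  ∃ (M : Finset G) (s : G → ((M → A) → A)), τ = nuca s

/-- `τ` is invertible: it is bijective and its inverse is a NUCA with finite memory. -/
def IsInvertibleNUCA (τ : (G → A) → (G → A)) : Prop :=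
  Function.Bijective τ ∧ ∃ ρ : (G → A) → (G → A), IsNUCAFin ρ ∧
    Function.LeftInverse ρ τ ∧ Function.RightInverse ρ τ

/-- `σ_s` is stably injective: `σ_p` is injective for every `p ∈ Σ(s)`. -/
def StablyInjective {M : Finset G} (s : G → ((M → A) → A)) : Prop :=
  ∀ p ∈ orbitClosure s, Function.Injective (nuca p)

/-- `σ_s` is stably invertible. -/
def StablyInvertible {M : Finset G} (s : G → ((M → A) → A)) : Prop :=
  ∃ (N : Finset G) (t : G → ((N → A) → A)),
    ∀ p ∈ orbitClosure s, ∃ q ∈ orbitClosure t,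
      nuca p ∘ nuca q = id ∧ nuca q ∘ nuca p = id

/-- Two configurations are asymptotic if they agree outside a finite set. -/
def Asymptotic (x y : G → S) : Prop :=
  ∃ Ω : Finset G, ∀ g ∉ Ω, x g = y g

/-- `s` is asymptotically constant. -/
def AsymptoticallyConstant (s : G → S) : Prop :=
  ∃ c : S, Asymptotic s fun _ => c

/-- `τ` is pre-injective. -/
def PreInjective (τ : (G → A) → (G → A)) : Prop :=
  ∀ x y : G → A, Asymptotic x y → τ x = τ y → x = y

/-- `τ` is post-surjective. -/
def PostSurjective (τ : (G → A) → (G → A)) : Prop :=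
  ∀ x y : G → A, Asymptotic y (τ x) → ∃ z : G → A, Asymptotic z x ∧ τ z = y

/-- `σ_s` is stably post-surjective: `σ_p` is post-surjective for all `p ∈ Σ(s)`. -/
def StablyPostSurjective {M : Finset G} (s : G → ((M → A) → A)) : Prop :=
  ∀ p ∈ orbitClosure s, PostSurjective (nuca p)

/-- `τ` is a cellular automaton: a NUCA with finite memory and a constant
configuration of local defining maps. -/
def IsCellularAutomaton (τ : (G → A) → (G → A)) : Prop :=
  ∃ (M : Finset G) (μ : (M → A) → A), τ = nuca fun _ : G => μ

/-- `G` is surjunctive: over every finite alphabet, injective CA are surjective. -/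
def Surjunctive (G : Type*) [Group G] : Prop :=
  ∀ (B : Type) [Fintype B] (τ : (G → B) → (G → B)),
    IsCellularAutomaton τ → Function.Injective τ → Function.Surjective τ

/-- `G` is post-injunctive: over every finite alphabet, post-surjective CA are
pre-injective. -/
def PostInjunctive (G : Type*) [Group G] : Prop :=
  ∀ (B : Type) [Fintype B] (τ : (G → B) → (G → B)),
    IsCellularAutomaton τ → PostSurjective τ → PreInjective τ

/-- `s` has uniformly bounded singularity: for every finite symmetric `E ∋ 1`
there is a finite `F ⊇ E` such that `s` is constant on `FE ∖ F`. -/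
def UniformlyBoundedSingularity (s : G → S) : Prop :=
  ∀ E : Finset G, (1 : G) ∈ E → (∀ g ∈ E, g⁻¹ ∈ E) →
    ∃ F : Finset G, E ⊆ F ∧ ∃ c : S,
      ∀ g ∈ ((F : Set G) * (E : Set G)) \ (F : Set G), s g = c

end Defs

/-!
Outside a finite set `Ω`, `s` equals a constant rule `c`. If `G` is finite, the injective map
`σ_s` is bijective and any map `A^G → A^G` is a NUCA with memory set `G`. If `G` is infinite,
`Σ(s)` consists of the translates of `s` together with the constant configuration `c`. Then `σ_c`
is an injective cellular automaton, hence bijective by surjunctivity, and its inverse is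
continuous and shift-equivariant, hence a cellular automaton `σ_μ`. The injective map `σ_μ ∘ σ_s`
changes no configuration outside a finite set `E`, so it permutes every finite set of
configurations that agree off `E`; thus `σ_s` is surjective. Its continuous inverse agrees with
`σ_μ` off `E`, so it is a NUCA `σ_t` with `t` asymptotic to a constant rule `c'` with
`σ_{c'} = σ_μ`, and the translates of `t` together with `c'` provide the inverses.
-/

section OrbitClosure

variable {G S : Type*} [Group G]

theorem mem_orbitClosure_iff {s p : G → S} :
    p ∈ orbitClosure s ↔ ∀ F : Finset G, ∃ g : G, ∀ h ∈ F, p h = s (g⁻¹ * h) := by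
  let _ : TopologicalSpace S := ⊥
  have : DiscreteTopology S := ⟨rfl⟩
  change p ∈ closure _ ↔ _
  rw [mem_closure_iff]
  constructor
  · intro H F
    have hopen : IsOpen ((F : Set G).pi fun h => {p h}) :=
      isOpen_set_pi F.finite_toSet fun _ _ => isOpen_discrete _
    obtain ⟨q, hqF, g, rfl⟩ := H _ hopen fun _ _ => rfl
    exact ⟨g, fun h hh => (hqF h hh).symm⟩
  · intro H U hU hpU
    obtain ⟨I, u, hIu, hsub⟩ := isOpen_pi_iff.mp hU p hpU
    obtain ⟨g, hg⟩ := H I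
    exact ⟨_, hsub fun i hi => hg i hi ▸ (hIu i hi).2, g, rfl⟩

theorem translate_mem_orbitClosure (s : G → S) (g : G) :
    (fun h => s (g⁻¹ * h)) ∈ orbitClosure s :=
  mem_orbitClosure_iff.mpr fun _ => ⟨g, fun _ _ => rfl⟩

theorem self_mem_orbitClosure (s : G → S) : s ∈ orbitClosure s := by
  simpa using translate_mem_orbitClosure s 1

theorem exists_eq_translate_of_mem_orbitClosure [Fintype G] {s p : G → S}
    (hp : p ∈ orbitClosure s) : ∃ g : G, p = fun h => s (g⁻¹ * h) := by
  obtain ⟨g, hg⟩ := mem_orbitClosure_iff.mp hp Finset.univ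
  exact ⟨g, funext fun h => hg h (Finset.mem_univ h)⟩

/-- If `p` is not a translate of `s`, then for every `g` some cell `f g` witnesses it; a single
finite window containing all the witnesses `f g` with `g ∈ h₀ Ω⁻¹` forces `p h₀ = c`. -/
theorem eq_translate_or_eq_const_of_mem_orbitClosure {s p : G → S} {c : S} {Ω : Finset G}
    (hs : ∀ g ∉ Ω, s g = c) (hp : p ∈ orbitClosure s) :
    (∃ g : G, p = fun h => s (g⁻¹ * h)) ∨ p = fun _ => c := by
  classical
  refine or_iff_not_imp_left.mpr fun hnot => funext fun h₀ => ?_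
  push Not at hnot
  choose f hf using fun g => Function.ne_iff.mp (hnot g)
  obtain ⟨g, hg⟩ := mem_orbitClosure_iff.mp hp (insert h₀ ((Ω.image (h₀ * ·⁻¹)).image f))
  by_contra hne
  have hΩ : g⁻¹ * h₀ ∈ Ω := by
    by_contra hΩ
    exact hne ((hg h₀ (Finset.mem_insert_self _ _)).trans (hs _ hΩ))
  have hgK : g ∈ Ω.image (h₀ * ·⁻¹) := Finset.mem_image.mpr ⟨_, hΩ, by group⟩
  exact hf g (hg _ (Finset.mem_insert_of_mem (Finset.mem_image_of_mem f hgK)))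

theorem const_mem_orbitClosure [Infinite G] {s : G → S} {c : S} {Ω : Finset G}
    (hs : ∀ g ∉ Ω, s g = c) : (fun _ => c) ∈ orbitClosure s := by
  classical
  refine mem_orbitClosure_iff.mpr fun F => ?_
  obtain ⟨g, hg⟩ := Infinite.exists_notMem_finset (F * Ω⁻¹)
  refine ⟨g, fun h hh => (hs _ fun hΩ => hg ?_).symm⟩
  simpa using Finset.mul_mem_mul hh (Finset.inv_mem_inv hΩ)

end OrbitClosure

section Memory

variable {G A : Type*} [Group G]

def IsShiftEquivariant (τ : (G → A) → (G → A)) : Prop :=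
  ∀ (g : G) (y : G → A), τ (fun h => y (g * h)) = fun h => τ y (g * h)

def HasMemorySet (τ : (G → A) → (G → A)) (N : Finset G) : Prop :=
  ∀ (g : G) (y y' : G → A), (∀ m ∈ N, y (g * m) = y' (g * m)) → τ y g = τ y' g

/-- The padding outside `N` is arbitrary; it does not matter when `N` is a memory set of `τ`. -/
noncomputable def localRule [Nonempty A] (N : Finset G) (τ : (G → A) → (G → A)) (g : G) :
    (N → A) → A :=
  fun pat => τ (fun h => extend Subtype.val pat (fun _ => Classical.arbitrary A) (g⁻¹ * h)) g

theorem hasMemorySet_nuca {M : Finset G} (s : G → ((M → A) → A)) : HasMemorySet (nuca s) M :=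
  fun g _ _ hy => congrArg (s g) (funext fun m => hy m m.2)

theorem HasMemorySet.mono {τ : (G → A) → (G → A)} {N N' : Finset G} (hτ : HasMemorySet τ N)
    (hN : N ⊆ N') : HasMemorySet τ N' :=
  fun g y y' hy => hτ g y y' fun m hm => hy m (hN hm)

theorem hasMemorySet_univ [Fintype G] (τ : (G → A) → (G → A)) : HasMemorySet τ Finset.univ :=
  fun g _ _ hy =>
    congrArg (τ · g) (funext fun h => by simpa using hy (g⁻¹ * h) (Finset.mem_univ _))

theorem HasMemorySet.nuca_localRule [Nonempty A] {τ : (G → A) → (G → A)} {N : Finset G}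
    (hτ : HasMemorySet τ N) : nuca (localRule N τ) = τ := by
  funext y g
  refine hτ g _ y fun m hm => ?_
  simp only [inv_mul_cancel_left]
  exact Subtype.val_injective.extend_apply _ _ ⟨m, hm⟩

theorem isShiftEquivariant_nuca_const {M : Finset G} (μ : (M → A) → A) :
    IsShiftEquivariant (nuca fun _ : G => μ) :=
  fun g y => funext fun h => congrArg μ (funext fun m => by simp only [mul_assoc])

theorem IsShiftEquivariant.of_leftInverse {τ ρ : (G → A) → (G → A)} (hτ : IsShiftEquivariant τ)
    (hl : LeftInverse ρ τ) (hr : RightInverse ρ τ) : IsShiftEquivariant ρ :=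
  fun g y => hl.injective <| by rw [hτ, hr y, hr]

theorem IsShiftEquivariant.apply_eq {τ : (G → A) → (G → A)} (hτ : IsShiftEquivariant τ)
    (y : G → A) (g : G) : τ y g = τ (fun h => y (g * h)) 1 := by
  rw [hτ]; simp only [mul_one]

theorem IsShiftEquivariant.hasMemorySet {τ : (G → A) → (G → A)} {N : Finset G}
    (hτ : IsShiftEquivariant τ) (h1 : DependsOn (fun y => τ y 1) N) : HasMemorySet τ N :=
  fun g y y' hy => by rw [hτ.apply_eq y, hτ.apply_eq y']; exact h1 hy

theorem IsShiftEquivariant.localRule_eq [Nonempty A] {τ : (G → A) → (G → A)}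
    (hτ : IsShiftEquivariant τ) (N : Finset G) (g : G) : localRule N τ g = localRule N τ 1 :=
  funext fun pat => by simp only [localRule, hτ.apply_eq _ g, inv_mul_cancel_left, inv_one, one_mul]

theorem IsShiftEquivariant.nuca_const_localRule [Nonempty A] {τ : (G → A) → (G → A)}
    {N : Finset G} (hτ : IsShiftEquivariant τ) (hN : HasMemorySet τ N) :
    nuca (fun _ : G => localRule N τ 1) = τ := by
  calc nuca (fun _ : G => localRule N τ 1)
      = nuca (localRule N τ) := congrArg nuca (funext fun g => (hτ.localRule_eq N g).symm)
    _ = τ := hN.nuca_localRule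

end Memory

section Topology

variable {A : Type*} [TopologicalSpace A] [DiscreteTopology A]

theorem continuous_nuca {G : Type*} [Group G] {M : Finset G} (s : G → ((M → A) → A)) :
    Continuous (nuca s) :=
  continuous_pi fun g => continuous_of_discreteTopology.comp
    (continuous_pi fun m => continuous_apply (g * (m : G)))

/-- Cylinders on which `F` is constant cover the compact space `ι → A`; finitely many suffice. -/
theorem exists_finset_dependsOn_of_continuous {ι B : Type*} [Finite A] [TopologicalSpace B]
    [DiscreteTopology B] {F : (ι → A) → B} (hF : Continuous F) :
    ∃ I : Finset ι, DependsOn F I := by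
  classical
  have hcyl : ∀ x : ι → A, ∃ I : Finset ι, (I : Set ι).pi (fun i => {x i}) ⊆ F ⁻¹' {F x} := by
    intro x
    obtain ⟨I, u, hu, hsub⟩ := isOpen_pi_iff.mp (hF.isOpen_preimage _ (isOpen_discrete {F x})) x rfl
    exact ⟨I, fun y hy => hsub fun i hi => (hy i hi : y i = x i) ▸ (hu i hi).2⟩
  choose I hI using hcyl
  obtain ⟨T, -, hT⟩ := isCompact_univ.elim_nhds_subcover (fun x => (I x : Set ι).pi fun i => {x i})
    fun x _ => (isOpen_set_pi (I x).finite_toSet fun _ _ => isOpen_discrete _).mem_nhds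
      fun i _ => rfl
  refine ⟨T.biUnion I, fun y y' hyy' => ?_⟩
  obtain ⟨x, hxT, hyx⟩ := Set.mem_iUnion₂.mp (hT (Set.mem_univ y))
  have hy'x : y' ∈ (I x : Set ι).pi fun i => {x i} := fun i hi =>
    (hyy' i (by simpa using ⟨x, hxT, hi⟩)).symm.trans (hyx i hi)
  exact (hI x hyx).trans (hI x hy'x).symm

variable {G : Type*} [Group G] [Finite A]

theorem IsShiftEquivariant.exists_nuca_const_eq [Nonempty A] {τ : (G → A) → (G → A)}
    (hτ : IsShiftEquivariant τ) (hcont : Continuous τ) :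
    ∃ (N : Finset G) (μ : (N → A) → A), τ = nuca fun _ => μ := by
  obtain ⟨N, hN⟩ := exists_finset_dependsOn_of_continuous ((continuous_apply 1).comp hcont)
  exact ⟨N, _, (hτ.nuca_const_localRule (hτ.hasMemorySet hN)).symm⟩

/-- Away from `E` the memory set of `ρ` serves; at each of the finitely many cells of `E`,
continuity provides a finite window. -/
theorem exists_hasMemorySet_of_continuous {τ ρ : (G → A) → (G → A)} {N₀ E : Finset G}
    (hτ : Continuous τ) (hρ : HasMemorySet ρ N₀) (hτρ : ∀ y, ∀ g ∉ E, τ y g = ρ y g) :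
    ∃ N : Finset G, N₀ ⊆ N ∧ HasMemorySet τ N := by
  classical
  choose I hI using fun g : G =>
    exists_finset_dependsOn_of_continuous ((continuous_apply g).comp hτ)
  refine ⟨N₀ ∪ E.biUnion fun g => (I g).image (g⁻¹ * ·), Finset.subset_union_left,
    fun g y y' hy => ?_⟩
  by_cases hg : g ∈ E
  · refine hI g fun i hi => ?_
    simpa using hy (g⁻¹ * i) 
      (Finset.mem_union_right _ (Finset.mem_biUnion.mpr ⟨g, hg, Finset.mem_image_of_mem _ hi⟩))
  · rw [hτρ y g hg, hτρ y' g hg]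
    exact hρ g y y' fun m hm => hy m (Finset.mem_union_left _ hm)

end Topology

theorem Continuous.continuous_of_leftInverse {X Y : Type*} [TopologicalSpace X]
    [TopologicalSpace Y] [CompactSpace X] [T2Space Y] {f : X → Y} {g : Y → X} (hf : Continuous f)
    (hl : LeftInverse g f) (hr : RightInverse g f) : Continuous g :=
  hf.continuous_symm_of_equiv_compact_to_t2 (f := ⟨f, g, hl, hr⟩)

theorem Function.Injective.surjective_of_eqOn_compl {ι A : Type*} [Finite A]
    {φ : (ι → A) → (ι → A)} {E : Finset ι} (hφ : Injective φ)
    (hE : ∀ x, EqOn (φ x) x (E : Set ι)ᶜ) : Surjective φ := by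
  classical
  intro y
  let Y : Set (ι → A) := {x | EqOn x y (E : Set ι)ᶜ}
  have hmaps : MapsTo φ Y Y := fun x hx => (hE x).trans hx
  have hfin : Y.Finite := Set.Finite.of_finite_image (f := fun x (i : E) => x i) (Set.toFinite _)
    fun x hx x' hx' hxx' => funext fun i =>
      if hi : i ∈ E then congrFun hxx' ⟨i, hi⟩ else (hx hi).trans (hx' hi).symm
  obtain ⟨x, -, hx⟩ := ((hfin.injOn_iff_bijOn_of_mapsTo hmaps).mp hφ.injOn).surjOn
    (fun _ _ => rfl : y ∈ Y)
  exact ⟨x, hx⟩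

section Inverse

variable {G A : Type*} [Group G]

theorem nuca_translate {M : Finset G} (s : G → ((M → A) → A)) (g : G) (x : G → A) :
    nuca (fun h => s (g⁻¹ * h)) x = fun h => nuca s (fun h' => x (g * h')) (g⁻¹ * h) := by
  funext h
  simp only [nuca, mul_assoc, mul_inv_cancel_left]

theorem nuca_translate_comp {M N : Finset G} {s : G → ((M → A) → A)} {t : G → ((N → A) → A)}
    (hst : nuca s ∘ nuca t = id) (g : G) :
    nuca (fun h => s (g⁻¹ * h)) ∘ nuca (fun h => t (g⁻¹ * h)) = id := by
  funext x h
  simpa [nuca_translate] using congrFun (congrFun hst fun h' => x (g * h')) (g⁻¹ * h)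

theorem exists_inverse_translate {M N : Finset G} {s : G → ((M → A) → A)}
    {t : G → ((N → A) → A)} (hst : nuca s ∘ nuca t = id) (hts : nuca t ∘ nuca s = id) (g : G) :
    ∃ q ∈ orbitClosure t, nuca (fun h => s (g⁻¹ * h)) ∘ nuca q = id ∧
      nuca q ∘ nuca (fun h => s (g⁻¹ * h)) = id :=
  ⟨_, translate_mem_orbitClosure t g, nuca_translate_comp hst g, nuca_translate_comp hts g⟩

theorem Surjunctive.surjective_nuca_const (hG : Surjunctive G) [Finite A] {M : Finset G}
    {μ : (M → A) → A} (hμ : Injective (nuca fun _ : G => μ)) :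
    Surjective (nuca fun _ : G => μ) := by
  obtain ⟨n, ⟨e⟩⟩ := Finite.exists_equiv_fin A
  let E : (G → A) ≃ (G → Fin n) := Equiv.piCongrRight fun _ => e
  have hconj : nuca (fun _ : G => fun pat : M → Fin n => e (μ (e.symm ∘ pat)))
      = E ∘ nuca (fun _ : G => μ) ∘ E.symm := rfl
  have hsurj := hG (Fin n) _ ⟨M, _, rfl⟩ <| by
    rw [hconj, E.comp_injective, E.symm.injective_comp]
    exact hμ
  rwa [hconj, E.comp_surjective, E.symm.surjective_comp] at hsurj

theorem nuca_nuca_apply_of_notMem {M N Ω : Finset G} [DecidableEq G] {s : G → ((M → A) → A)}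
    {c : (M → A) → A} {μ : (N → A) → A} (hs : ∀ g ∉ Ω, s g = c)
    (hμ : LeftInverse (nuca fun _ : G => μ) (nuca fun _ : G => c)) (x : G → A) {g : G}
    (hg : g ∉ Ω * N⁻¹) : nuca (fun _ => μ) (nuca s x) g = x g := by
  have hagree : ∀ m ∈ N, nuca s x (g * m) = nuca (fun _ => c) x (g * m) := fun m hm => by
    have : g * m ∉ Ω := fun hΩ => hg (by simpa using Finset.mul_mem_mul hΩ (Finset.inv_mem_inv hm))
    simp only [nuca, hs _ this]
  calc nuca (fun _ => μ) (nuca s x) g = nuca (fun _ => μ) (nuca (fun _ => c) x) g :=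
        hasMemorySet_nuca _ g _ _ hagree
    _ = x g := by rw [hμ x]

theorem exists_nuca_eq_of_continuous [TopologicalSpace A] [DiscreteTopology A] [Finite A]
    [Nonempty A] {N₀ E : Finset G} {τ : (G → A) → (G → A)} {μ : (N₀ → A) → A}
    (hτ : Continuous τ) (hτμ : ∀ y, ∀ g ∉ E, τ y g = nuca (fun _ => μ) y g) :
    ∃ (N : Finset G) (t : G → ((N → A) → A)) (c : (N → A) → A),
      nuca t = τ ∧ (∀ g ∉ E, t g = c) ∧ nuca (fun _ : G => c) = nuca fun _ : G => μ := by
  obtain ⟨N, hN₀N, hN⟩ := exists_hasMemorySet_of_continuous hτ (hasMemorySet_nuca _) hτμ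
  have hμ := isShiftEquivariant_nuca_const μ
  refine ⟨N, localRule N τ, localRule N (nuca fun _ => μ) 1, hN.nuca_localRule, fun g hg => ?_,
    hμ.nuca_const_localRule ((hasMemorySet_nuca _).mono hN₀N)⟩
  calc localRule N τ g = localRule N (nuca fun _ => μ) g := funext fun _ => hτμ _ g hg
    _ = localRule N (nuca fun _ => μ) 1 := hμ.localRule_eq N g

theorem stablyInvertible_of_inverse [Infinite G] {M N Ω E : Finset G} {s : G → ((M → A) → A)}
    {t : G → ((N → A) → A)} {c : (M → A) → A} {c' : (N → A) → A} (hs : ∀ g ∉ Ω, s g = c)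
    (ht : ∀ g ∉ E, t g = c') (hst : nuca s ∘ nuca t = id) (hts : nuca t ∘ nuca s = id)
    (hcc' : nuca (fun _ : G => c) ∘ nuca (fun _ : G => c') = id)
    (hc'c : nuca (fun _ : G => c') ∘ nuca (fun _ : G => c) = id) : StablyInvertible s := by
  refine ⟨N, t, fun p hp => ?_⟩
  rcases eq_translate_or_eq_const_of_mem_orbitClosure hs hp with ⟨g, rfl⟩ | rfl
  · exact exists_inverse_translate hst hts g
  · exact ⟨_, const_mem_orbitClosure ht, hcc', hc'c⟩

theorem stablyInvertible_of_bijective [Fintype G] [Nonempty A] {M : Finset G}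
    {s : G → ((M → A) → A)} (hs : Bijective (nuca s)) : StablyInvertible s := by
  obtain ⟨τ, hτs, hsτ⟩ := bijective_iff_has_inverse.mp hs
  rw [← (hasMemorySet_univ τ).nuca_localRule] at hτs hsτ
  refine ⟨Finset.univ, localRule Finset.univ τ, fun p hp => ?_⟩
  obtain ⟨g, rfl⟩ := exists_eq_translate_of_mem_orbitClosure hp
  exact exists_inverse_translate hsτ.comp_eq_id hτs.comp_eq_id g

theorem stablyInvertible_of_bijective_nuca_const [Infinite G] [Finite A] [Nonempty A]
    {M Ω : Finset G} {s : G → ((M → A) → A)} {c : (M → A) → A} (hs : ∀ g ∉ Ω, s g = c)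
    (hinj : Injective (nuca s)) (hc : Bijective (nuca fun _ : G => c)) : StablyInvertible s := by
  classical
  let _ : TopologicalSpace A := ⊥
  have : DiscreteTopology A := ⟨rfl⟩
  obtain ⟨ρ, hρc, hcρ⟩ := bijective_iff_has_inverse.mp hc
  obtain ⟨N₀, μ, rfl⟩ := ((isShiftEquivariant_nuca_const c).of_leftInverse hρc hcρ).exists_nuca_const_eq
    ((continuous_nuca _).continuous_of_leftInverse hρc hcρ)
  have key : ∀ x, EqOn (nuca (fun _ => μ) (nuca s x)) x (Ω * N₀⁻¹ : Finset G)ᶜ :=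
    fun x _ hg => nuca_nuca_apply_of_notMem hs hρc x hg
  have hsurj : Surjective (nuca s) :=
    ((hcρ.injective.comp hinj).surjective_of_eqOn_compl key).of_comp_left hcρ.injective
  obtain ⟨τ, hτs, hsτ⟩ := bijective_iff_has_inverse.mp ⟨hinj, hsurj⟩
  have hτμ : ∀ y, ∀ g ∉ Ω * N₀⁻¹, τ y g = nuca (fun _ => μ) y g := fun y g hg => by
    rw [← key (τ y) hg, hsτ y]
  obtain ⟨N, t, c', rfl, ht, hc'⟩ :=
    exists_nuca_eq_of_continuous ((continuous_nuca s).continuous_of_leftInverse hτs hsτ) hτμ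
  exact stablyInvertible_of_inverse hs ht hsτ.comp_eq_id hτs.comp_eq_id
    (by rw [hc']; exact hcρ.comp_eq_id) (by rw [hc']; exact hρc.comp_eq_id)

theorem stablyInvertible_of_isEmpty [IsEmpty A] {M : Finset G} (s : G → ((M → A) → A)) :
    StablyInvertible s :=
  ⟨{1}, fun _ pat => pat ⟨1, Finset.mem_singleton_self 1⟩,
    fun _ _ => ⟨_, self_mem_orbitClosure _, Subsingleton.elim _ _, Subsingleton.elim _ _⟩⟩

end Inverse

theorem theoremA_general {G : Type*} [Group G] (hG : Surjunctive G)
    {A : Type*} [Fintype A] {M : Finset G} (s : G → ((M → A) → A))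
    (hconst : AsymptoticallyConstant s) (hinj : StablyInjective s) :
    StablyInvertible s := by
  rcases isEmpty_or_nonempty A with hA | hA
  · exact stablyInvertible_of_isEmpty s
  have hs : Injective (nuca s) := hinj s (self_mem_orbitClosure s)
  cases fintypeOrInfinite G
  · exact stablyInvertible_of_bijective (Finite.injective_iff_bijective.mp hs)
  obtain ⟨c, Ω, hΩ⟩ := hconst
  have hc : Injective (nuca fun _ : G => c) := hinj _ (const_mem_orbitClosure hΩ)
  exact stablyInvertible_of_bijective_nuca_const hΩ hs ⟨hc, hG.surjective_nuca_const hc⟩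

/-- Theorem A: over a countable surjunctive group universe and a
finite alphabet, every stably injective NUCA with finite memory and
asymptotically constant configuration of local defining maps is stably
invertible. -/
theorem theoremA {G : Type*} [Group G] [Countable G] (hG : Surjunctive G)
    {A : Type*} [Fintype A] {M : Finset G} (s : G → ((M → A) → A))
    (hconst : AsymptoticallyConstant s) (hinj : StablyInjective s) :
    StablyInvertible s :=
  theoremA_general hG s hconst hinj
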